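/- Let L ⊆ Ã* be a language of reduced words with μ(L) = G, let ν : ℕ → ℕ be non-decreasing, and suppose (G, L) satisfies Property BP_ν. Let H, K ≤ G be L-quasi-convex subgroups with common constant of L-quasi-convexity k. Then: (1) for every g ∈ G such that K ∩ H^g is infinite, there exists s ∈ G with |s| ≤ 2ν(k) and HgK = HsK; (2) moreover there exist such s and an element r' ∈ K with K ∩ H^g = (K ∩ H^s)^{r'⁻¹}; consequently every infinite intersection K ∩ H^g (g ∈ G) is conjugate in K to a member of the finite family { K ∩ H^s : s ∈ G, |s| ≤ 2ν(k), K ∩ H^s infinite }. -/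
import Mathlib


open List

/-- A word over the alphabet Ã = A ∪ A⁻¹ is a `List (A × Bool)`: the letter `(a, true)`
stands for `a` and `(a, false)` for the formal inverse `a⁻¹`. A word is *reduced* if it
has no factor `a·a⁻¹` or `a⁻¹·a`. -/
def Reduced {A : Type*} (w : List (A × Bool)) : Prop :=
  w.Chain' fun p q => ¬(p.1 = q.1 ∧ q.2 = !p.2)

variable {A : Type*} [Fintype A] {G : Type*} [Group G]

/-- Evaluation in `G` of a word over Ã, determined by the images `f a` of the letters.
This is the (inverse-respecting) monoid homomorphism μ : Ã* → G. -/
def eval (f : A → G) (w : List (A × Bool)) : G :=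
  (w.map fun p => if p.2 then f p.1 else (f p.1)⁻¹).prod

/-- Word length of `g ∈ G` with respect to the generators `A`:
the least length of a word over Ã mapping onto `g`. -/
noncomputable def wlen (f : A → G) (g : G) : ℕ :=
  sInf {n | ∃ w : List (A × Bool), eval f w = g ∧ w.length = n}

/-- A rational structure: `L` is a regular language of reduced words with μ(L) = G. -/
def RationalStructure (f : A → G) (L : Set (List (A × Bool))) : Prop :=
  Language.IsRegular (L : Language (A × Bool)) ∧ (∀ w ∈ L, Reduced w) ∧
    ∀ g : G, ∃ w ∈ L, eval f w = g

/-- `H` is L-quasi-convex with constant `k`: for every `w ∈ L` with `μ(w) ∈ H` and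
every prefix `u` of `w`, there is `h ∈ H` with `|h⁻¹ μ(u)| ≤ k`. -/
def QCW (f : A → G) (L : Set (List (A × Bool))) (H : Subgroup G) (k : ℕ) : Prop :=
  ∀ w ∈ L, eval f w ∈ H → ∀ u, u <+: w → ∃ h ∈ H, wlen f (h⁻¹ * eval f u) ≤ k

/-- The set of right cosets `H·μ(u)` where `u` ranges over prefixes of words
`w ∈ L` with `μ(w) ∈ H` (the vertex set of the Stallings graph Γ_L(H)). -/
def VL (f : A → G) (L : Set (List (A × Bool))) (H : Subgroup G) : Set (Set G) :=
  {S | ∃ w ∈ L, eval f w ∈ H ∧ ∃ u, u <+: w ∧ S = {x | ∃ h ∈ H, x = h * eval f u}}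

/-- The left coset g·H as a subset of G. -/
def lcoset (g : G) (H : Subgroup G) : Set G := {x | ∃ h ∈ H, x = g * h}

/-- The right coset H·g as a subset of G. -/
def rcoset (H : Subgroup G) (g : G) : Set G := {x | ∃ h ∈ H, x = h * g}

/-- The conjugate subgroup H^g = g⁻¹Hg. -/
def conjG {G : Type*} [Group G] (H : Subgroup G) (g : G) : Subgroup G :=
  Subgroup.map ((MulAut.conj g⁻¹).toMonoidHom) H

/-- The double coset H·g·K as a subset of G. -/
def dcoset (H : Subgroup G) (g : G) (K : Subgroup G) : Set G :=
  {x | ∃ h ∈ H, ∃ k ∈ K, x = h * g * k}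

/-- Property BP_ν: whenever H, K are L-quasi-convex subgroups with common constant k,
and K, g₁H, …, g_nH are pairwise distinct subsets of G such that
K ∩ g₁Hg₁⁻¹ ∩ … ∩ g_nHg_n⁻¹ is infinite, there exists z ∈ G such that the ball of
center z and radius ν(k) (in the word metric) meets K and each coset g_iH. -/
def BP (f : A → G) (L : Set (List (A × Bool))) (ν : ℕ → ℕ) : Prop :=
  ∀ (H K : Subgroup G) (k : ℕ), QCW f L H k → QCW f L K k →
    ∀ n : ℕ, 1 ≤ n → ∀ g : Fin n → G,
      Function.Injective
        (Fin.cons (K : Set G) (fun i => lcoset (g i) H) : Fin (n + 1) → Set G) →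
      (((K ⊓ ⨅ i, conjG H (g i)⁻¹ : Subgroup G) : Set G)).Infinite →
      ∃ z : G, (∃ w ∈ K, wlen f (z⁻¹ * w) ≤ ν k) ∧
        ∀ i, ∃ w ∈ lcoset (g i) H, wlen f (z⁻¹ * w) ≤ ν k

/-! ### Auxiliary lemmas -/

lemma eval_append (f : A → G) (u v : List (A × Bool)) :
    eval f (u ++ v) = eval f u * eval f v := by
  simp [eval]

/-- Formal inverse of a word. -/
def invWord {A : Type*} (w : List (A × Bool)) : List (A × Bool) :=
  (w.map fun p => (p.1, !p.2)).reverse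

lemma eval_invWord (f : A → G) (w : List (A × Bool)) :
    eval f (invWord w) = (eval f w)⁻¹ := by
  induction w with
  | nil => simp [eval, invWord]
  | cons p t ih =>
    have h : invWord (p :: t) = invWord t ++ [(p.1, !p.2)] := by simp [invWord]
    rw [h, eval_append, ih]
    obtain ⟨a, b⟩ := p
    cases b <;> simp [eval, mul_inv_rev]

lemma wlen_le (f : A → G) {g : G} (w : List (A × Bool)) (h : eval f w = g) :
    wlen f g ≤ w.length := Nat.sInf_le ⟨w, h, rfl⟩

lemma wlen_spec (f : A → G) (hne : ∀ g : G, ∃ w : List (A × Bool), eval f w = g) (g : G) :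
    ∃ w : List (A × Bool), eval f w = g ∧ w.length = wlen f g := by
  have hN : {n | ∃ w : List (A × Bool), eval f w = g ∧ w.length = n}.Nonempty := by
    obtain ⟨w, hw⟩ := hne g
    exact ⟨w.length, w, hw, rfl⟩
  exact Nat.sInf_mem hN

lemma wlen_mul_le (f : A → G) (hne : ∀ g : G, ∃ w : List (A × Bool), eval f w = g)
    (x y : G) : wlen f (x * y) ≤ wlen f x + wlen f y := by
  obtain ⟨u, hu, hul⟩ := wlen_spec f hne x
  obtain ⟨v, hv, hvl⟩ := wlen_spec f hne y
  calc wlen f (x * y) ≤ (u ++ v).length :=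
        wlen_le f _ (by rw [eval_append, hu, hv])
    _ = wlen f x + wlen f y := by simp [hul, hvl]

lemma wlen_inv_le (f : A → G) (hne : ∀ g : G, ∃ w : List (A × Bool), eval f w = g)
    (x : G) : wlen f x⁻¹ ≤ wlen f x := by
  obtain ⟨u, hu, hul⟩ := wlen_spec f hne x
  calc wlen f x⁻¹ ≤ (invWord u).length :=
        wlen_le f _ (by rw [eval_invWord, hu])
    _ = wlen f x := by simp [invWord, hul]

lemma mem_conjG {H : Subgroup G} {g x : G} : x ∈ conjG H g ↔ g * x * g⁻¹ ∈ H := by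
  simp only [conjG, Subgroup.mem_map, MulEquiv.coe_toMonoidHom, MulAut.conj_apply, inv_inv]
  constructor
  · rintro ⟨h, hh, rfl⟩
    have he : g * (g⁻¹ * h * g) * g⁻¹ = h := by group
    rwa [he]
  · intro hx
    exact ⟨g * x * g⁻¹, hx, by group⟩

lemma dcoset_eq {H K : Subgroup G} {g a b : G} (ha : a ∈ H) (hb : b ∈ K) :
    dcoset H g K = dcoset H (a * g * b) K := by
  ext x
  constructor
  · rintro ⟨h, hh, c, hc, rfl⟩
    exact ⟨h * a⁻¹, H.mul_mem hh (H.inv_mem ha), b⁻¹ * c,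
      K.mul_mem (K.inv_mem hb) hc, by group⟩
  · rintro ⟨h, hh, c, hc, rfl⟩
    exact ⟨h * a, H.mul_mem hh ha, b * c, K.mul_mem hb hc, by group⟩

lemma conj_inter (H K : Subgroup G) {g η κ : G} (hη : η ∈ H) (hκ : κ ∈ K) :
    K ⊓ conjG H g = conjG (K ⊓ conjG H (η⁻¹ * g * κ)) κ⁻¹ := by
  ext x
  simp only [Subgroup.mem_inf, mem_conjG, inv_inv]
  constructor
  · rintro ⟨hx1, hx2⟩
    refine ⟨?_, ?_⟩
    · exact K.mul_mem (K.mul_mem (K.inv_mem hκ) hx1) hκ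
    · have h2 : η⁻¹ * g * κ * (κ⁻¹ * x * κ) * (η⁻¹ * g * κ)⁻¹
          = η⁻¹ * (g * x * g⁻¹) * η := by group
      rw [h2]
      exact H.mul_mem (H.mul_mem (H.inv_mem hη) hx2) hη
  · rintro ⟨hx1, hx2⟩
    have h2 : η⁻¹ * g * κ * (κ⁻¹ * x * κ) * (η⁻¹ * g * κ)⁻¹
        = η⁻¹ * (g * x * g⁻¹) * η := by group
    rw [h2] at hx2
    constructor
    · have := K.mul_mem (K.mul_mem hκ hx1) (K.inv_mem hκ)
      have he : κ * (κ⁻¹ * x * κ) * κ⁻¹ = x := by group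
      rwa [he] at this
    · have := H.mul_mem (H.mul_mem hη hx2) (H.inv_mem hη)
      have he : η * (η⁻¹ * (g * x * g⁻¹) * η) * η⁻¹ = g * x * g⁻¹ := by group
      rwa [he] at this

/-- under Property BP_ν, for L-quasi-convex H, K with common constant k:
(1) every double coset HgK with K ∩ H^g infinite has a representative s of length
≤ 2ν(k); (2) moreover one can choose such an s and r' ∈ K with
K ∩ H^g = (K ∩ H^s)^{r'⁻¹}; consequently every infinite intersection K ∩ H^g is
conjugate in K to a member of the finite family
{ K ∩ H^s : |s| ≤ 2ν(k), K ∩ H^s infinite }. -/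
theorem stmt10 (f : A → G) (L : Set (List (A × Bool)))
    (hred : ∀ w ∈ L, Reduced w) (hsurj : ∀ g : G, ∃ w ∈ L, eval f w = g)
    (ν : ℕ → ℕ) (hν : Monotone ν) (hBP : BP f L ν)
    (H K : Subgroup G) (k : ℕ) (hH : QCW f L H k) (hK : QCW f L K k) :
    (∀ g : G, (((K ⊓ conjG H g : Subgroup G) : Set G)).Infinite →
      ∃ s : G, wlen f s ≤ 2 * ν k ∧ dcoset H g K = dcoset H s K) ∧
    (∀ g : G, (((K ⊓ conjG H g : Subgroup G) : Set G)).Infinite →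
      ∃ s : G, ∃ r' ∈ K, wlen f s ≤ 2 * ν k ∧ dcoset H g K = dcoset H s K ∧
        K ⊓ conjG H g = conjG (K ⊓ conjG H s) r'⁻¹) ∧
    {J : Subgroup G | ∃ s : G, wlen f s ≤ 2 * ν k ∧
      (((K ⊓ conjG H s : Subgroup G) : Set G)).Infinite ∧ J = K ⊓ conjG H s}.Finite := by
  have hne : ∀ g : G, ∃ w : List (A × Bool), eval f w = g := by
    intro g
    obtain ⟨w, _, hw⟩ := hsurj g
    exact ⟨w, hw⟩
  have key : ∀ g : G, (((K ⊓ conjG H g : Subgroup G) : Set G)).Infinite →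
      ∃ s : G, ∃ r' ∈ K, wlen f s ≤ 2 * ν k ∧ dcoset H g K = dcoset H s K ∧
        K ⊓ conjG H g = conjG (K ⊓ conjG H s) r'⁻¹ := by
    intro g hinf
    by_cases hcase : (K : Set G) = lcoset g⁻¹ H
    · -- degenerate case: then g ∈ H
      have hg : g ∈ H := by
        have h1 : (1 : G) ∈ lcoset g⁻¹ H := hcase ▸ K.one_mem
        obtain ⟨h, hh, he⟩ := h1
        have : g = h := by
          have := he.symm
          rw [← eq_inv_mul_iff_mul_eq] at this
          simpa using this.symm
        rwa [this]
      refine ⟨1, 1, K.one_mem, ?_, ?_, ?_⟩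
      · exact le_trans (wlen_le f [] (by simp [eval])) (Nat.zero_le _)
      · have := dcoset_eq (H := H) (K := K) (g := g) (H.inv_mem hg) K.one_mem
        simpa using this
      · have := conj_inter H K (g := g) hg K.one_mem
        simpa using this
    · -- main case: apply BP with n = 1, g₁ = g⁻¹
      have hinf' : (((K ⊓ ⨅ _ : Fin 1, conjG H ((fun _ : Fin 1 => g⁻¹) 0)⁻¹ :
          Subgroup G) : Set G)).Infinite := by
        simpa [inv_inv, iInf_const] using hinf
      have hinj : Function.Injective
          (Fin.cons (K : Set G) (fun _ : Fin 1 => lcoset g⁻¹ H) : Fin 2 → Set G) := by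
        intro i j hij
        fin_cases i <;> fin_cases j <;>
          simp only [Fin.cons_zero, Fin.cons_one, Fin.mk_zero, Fin.mk_one] at hij ⊢ <;>
          first | rfl | exact absurd hij hcase | exact absurd hij.symm hcase
      obtain ⟨z, ⟨κ, hκ, hκl⟩, hall⟩ :=
        hBP H K k hH hK 1 le_rfl (fun _ => g⁻¹) hinj (by simpa [inv_inv, iInf_const] using hinf)
      obtain ⟨w, ⟨η, hη, hw⟩, hwl⟩ := hall 0
      subst hw
      -- s = η⁻¹ * g * κ
      refine ⟨η⁻¹ * g * κ, κ, hκ, ?_, dcoset_eq (H.inv_mem hη) hκ,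
        conj_inter H K hη hκ⟩
      have hs : η⁻¹ * g * κ = (z⁻¹ * (g⁻¹ * η))⁻¹ * (z⁻¹ * κ) := by group
      calc wlen f (η⁻¹ * g * κ)
          ≤ wlen f (z⁻¹ * (g⁻¹ * η))⁻¹ + wlen f (z⁻¹ * κ) := by
            rw [hs]; exact wlen_mul_le f hne _ _
        _ ≤ wlen f (z⁻¹ * (g⁻¹ * η)) + wlen f (z⁻¹ * κ) := by
            exact Nat.add_le_add_right (wlen_inv_le f hne _) _
        _ ≤ ν k + ν k := Nat.add_le_add hwl hκl
        _ = 2 * ν k := by ring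
  refine ⟨?_, key, ?_⟩
  · intro g hinf
    obtain ⟨s, r', _, hlen, hdc, _⟩ := key g hinf
    exact ⟨s, hlen, hdc⟩
  · have hfin : {s : G | wlen f s ≤ 2 * ν k}.Finite := by
      have hw : {w : List (A × Bool) | w.length ≤ 2 * ν k}.Finite :=
        List.finite_length_le _ _
      refine (hw.image (eval f)).subset ?_
      intro s hs
      obtain ⟨w, hwev, hwlen⟩ := wlen_spec f hne s
      exact ⟨w, by simpa [hwlen] using hs, hwev⟩
    refine ((hfin.image (fun s => K ⊓ conjG H s)).subset ?_)
    rintro J ⟨s, h1, _, rfl⟩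
    exact ⟨s, h1, rfl⟩
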